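/- Let G be a σ-compact locally compact group with Haar measure μ_G and fixed symmetric open relatively compact unit neighborhood Q. Let Ψ : G → [0,∞) be continuous and Λ a relatively separated family in G. Then for every y ∈ G: Σ_{λ∈Λ} Ψ(y⁻¹λ) ≤ (Rel(Λ)/μ_G(Q)) · ∫_G M_Q Ψ(z) dμ_G(z). -/

import Mathlib

open MeasureTheory Measure
open scoped Pointwise ENNReal

/-! Each translate `y⁻¹λ • Q` has measure `μ(Q)`, and on it `Ψ(y⁻¹λ) ≤ M_Q Ψ` because `Q` is
symmetric; so `Σ_λ Ψ(y⁻¹λ) μ(Q)` is the integral of `Σ_λ Ψ(y⁻¹λ) 𝟙_{y⁻¹λ • Q}`. A point `z`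
lies in `y⁻¹λ • Q` exactly when `λ ∈ yz • Q`, which happens for at most `Rel(Λ)` indices, so
the integrand is at most `Rel(Λ) · M_Q Ψ(z)`. -/

section BoundedOverlap

variable {α ι : Type*} {S : ι → Set α} {c : ι → ℝ≥0∞} {f : α → ℝ≥0∞} {N : ℕ}

theorem sum_indicator_le_mul_of_encard_le (hS : ∀ z, {i | z ∈ S i}.encard ≤ N)
    (hc : ∀ i, ∀ z ∈ S i, c i ≤ f z) (s : Finset ι) (z : α) :
    ∑ i ∈ s, (S i).indicator (fun _ => c i) z ≤ N * f z := by
  classical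
  have hcard : (s.filter (z ∈ S ·)).card ≤ N := by
    have : ((s.filter (z ∈ S ·) : Finset ι) : Set ι).encard ≤ N :=
      (Set.encard_le_encard fun i hi => (Finset.mem_filter.mp hi).2).trans (hS z)
    rwa [Set.encard_coe_eq_coe_finsetCard, Nat.cast_le] at this
  calc ∑ i ∈ s, (S i).indicator (fun _ => c i) z
      = ∑ i ∈ s.filter (z ∈ S ·), c i := Finset.sum_indicator_eq_sum_filter _ _ _ _
    _ ≤ (s.filter (z ∈ S ·)).card • f z :=
        Finset.sum_le_card_nsmul _ _ _ fun i hi => hc i z (Finset.mem_filter.mp hi).2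
    _ ≤ N * f z := by rw [nsmul_eq_mul]; gcongr

theorem tsum_mul_measure_le_of_encard_le [MeasurableSpace α] (μ : Measure α)
    (hSm : ∀ i, MeasurableSet (S i)) (hS : ∀ z, {i | z ∈ S i}.encard ≤ N)
    (hc : ∀ i, ∀ z ∈ S i, c i ≤ f z) :
    ∑' i, c i * μ (S i) ≤ N * ∫⁻ z, f z ∂μ := by
  refine ENNReal.summable.tsum_le_of_sum_le fun s => ?_
  calc ∑ i ∈ s, c i * μ (S i)
      = ∑ i ∈ s, ∫⁻ z, (S i).indicator (fun _ => c i) z ∂μ := by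
        simp only [lintegral_indicator_const (hSm _)]
    _ = ∫⁻ z, ∑ i ∈ s, (S i).indicator (fun _ => c i) z ∂μ :=
        (lintegral_finsetSum s fun i _ => measurable_const.indicator (hSm i)).symm
    _ ≤ ∫⁻ z, N * f z ∂μ := lintegral_mono (sum_indicator_le_mul_of_encard_le hS hc s)
    _ = N * ∫⁻ z, f z ∂μ := lintegral_const_mul' _ _ (ENNReal.natCast_ne_top N)

end BoundedOverlap

section SymmetricSet

variable {G : Type*} [Group G] {Q : Set G}

theorem mem_smul_set_comm_of_inv_eq (hQ : Q⁻¹ = Q) {a b : G} : a ∈ b • Q ↔ b ∈ a • Q := by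
  have key : ∀ a b : G, a ∈ b • Q → b ∈ a • Q := fun a b h => by
    rw [Set.mem_smul_set_iff_inv_smul_mem] at h ⊢
    rw [← hQ, Set.mem_inv]
    simpa [smul_eq_mul] using h
  exact ⟨key a b, key b a⟩

theorem le_biSup_mul_of_mem_smul_set (hQ : Q⁻¹ = Q) (Ψ : G → ℝ≥0∞) {x z : G}
    (hz : z ∈ x • Q) : Ψ x ≤ ⨆ q ∈ Q, Ψ (z * q) := by
  obtain ⟨q, hq, rfl⟩ := (mem_smul_set_comm_of_inv_eq hQ).mp hz
  exact le_biSup (fun q => Ψ (z * q)) hq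

end SymmetricSet

theorem sum_envelope_le_amalgam_norm_general
    {G : Type*} [Group G] [TopologicalSpace G] [IsTopologicalGroup G]
    [MeasurableSpace G] [BorelSpace G]
    (μ : Measure G) [μ.IsHaarMeasure]
    -- fixed symmetric open relatively compact unit neighborhood Q
    (Q : Set G) (hQopen : IsOpen Q) (hQone : (1 : G) ∈ Q) (hQsymm : Q⁻¹ = Q)
    (hQcomp : IsCompact (closure Q))
    (Ψ : G → ℝ≥0∞)
    -- a relatively separated family with Rel(Λ) ≤ N
    {ι : Type*} (Λ : ι → G) (N : ℕ)
    (hsep : ∀ x : G, {i : ι | Λ i ∈ x • Q}.Finite ∧ {i : ι | Λ i ∈ x • Q}.ncard ≤ N)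
    (y : G) :
    ∑' i : ι, Ψ (y⁻¹ * Λ i)
      ≤ ((N : ℝ≥0∞) / μ Q) * ∫⁻ z, ⨆ q ∈ Q, Ψ (z * q) ∂μ := by
  have hμQ0 : μ Q ≠ 0 := (hQopen.measure_pos μ ⟨1, hQone⟩).ne'
  have hμQtop : μ Q ≠ ∞ := ((measure_mono subset_closure).trans_lt hQcomp.measure_lt_top).ne
  have hoverlap (z : G) : {i | z ∈ (y⁻¹ * Λ i) • Q}.encard ≤ N := by
    obtain ⟨hfin, hcard⟩ := hsep (y * z)
    refine (Set.encard_le_encard fun i hi => ?_).trans (hfin.cast_ncard_eq ▸ Nat.cast_le.mpr hcard)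
    rw [Set.mem_ofPred_eq, mem_smul_set_comm_of_inv_eq hQsymm,
      Set.mem_smul_set_iff_inv_smul_mem] at hi
    simpa [Set.mem_smul_set_iff_inv_smul_mem, mul_assoc] using hi
  have hsum := tsum_mul_measure_le_of_encard_le μ (fun i => (hQopen.smul _).measurableSet)
    hoverlap fun i z => le_biSup_mul_of_mem_smul_set hQsymm Ψ
  simp only [measure_smul] at hsum
  rw [← ENNReal.mul_div_right_comm, ENNReal.le_div_iff_mul_le (.inl hμQ0) (.inl hμQtop),
    ← ENNReal.tsum_mul_right]
  exact hsum

/-- Equation (2.3) of Lemma 2.4: for a continuous `Ψ : G → [0,∞)` and a relatively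
separated family `Λ`, `Σ_λ Ψ(y⁻¹λ) ≤ (Rel(Λ)/μ(Q)) · ‖M_Q Ψ‖_{L¹}` for every `y`. -/
theorem sum_envelope_le_amalgam_norm
    {G : Type*} [Group G] [TopologicalSpace G] [IsTopologicalGroup G]
    [LocallyCompactSpace G] [SigmaCompactSpace G]
    [MeasurableSpace G] [BorelSpace G]
    (μ : Measure G) [μ.IsHaarMeasure]
    -- fixed symmetric open relatively compact unit neighborhood Q
    (Q : Set G) (hQopen : IsOpen Q) (hQone : (1 : G) ∈ Q) (hQsymm : Q⁻¹ = Q)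
    (hQcomp : IsCompact (closure Q))
    -- continuous nonnegative (finite-valued) envelope
    (Ψ : G → ℝ≥0∞) (hΨc : Continuous Ψ) (hΨfin : ∀ x, Ψ x ≠ ∞)
    -- a relatively separated family with Rel(Λ) ≤ N
    {ι : Type*} (Λ : ι → G) (N : ℕ)
    (hsep : ∀ x : G, {i : ι | Λ i ∈ x • Q}.Finite ∧ {i : ι | Λ i ∈ x • Q}.ncard ≤ N)
    (y : G) :
    ∑' i : ι, Ψ (y⁻¹ * Λ i)
      ≤ ((N : ℝ≥0∞) / μ Q) * ∫⁻ z, ⨆ q ∈ Q, Ψ (z * q) ∂μ :=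
  sum_envelope_le_amalgam_norm_general μ Q hQopen hQone hQsymm hQcomp Ψ Λ N hsep y
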